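/- arXiv:1106.0889 — 9 statements merged into one kernel-verified Lean document; each statement's English description precedes it below -/
import Mathlib

section
/- Let a ≥ 0, e ≥ 3, c ≥ 1 be integers, set P = (e+1)(e−a)(e²−e+a) and Q = e³ + (2a+1)e + a. If the Krein condition K₂(c) = P + Qc − ec² ≥ 0 holds, then c ≤ e² + e + 2a. -/
/-!
`K₂` is a concave quadratic in `c`. At `c₀ = e² + e + 2a + 1` it takes the value
`a(3e + 1) - a²(e - 1) - (a + 1)e³ - 2e²`, which is negative as soon as `e³ ≥ 3e + 1`,
and the vertex of the parabola lies to the left of `c₀`; hence `K₂(c) < 0` for all `c ≥ c₀`.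
-/

section KreinQuantity

variable {R : Type*} [CommRing R]

def kreinQuantity (a e c : R) : R :=
  (e + 1) * (e - a) * (e ^ 2 - e + a) + (e ^ 3 + (2 * a + 1) * e + a) * c - e * c ^ 2

theorem kreinQuantity_sub_kreinQuantity (a e c d : R) :
    kreinQuantity a e c - kreinQuantity a e d =
      (c - d) * (e ^ 3 + (2 * a + 1) * e + a - e * (c + d)) := by
  unfold kreinQuantity
  ring

theorem kreinQuantity_threshold (a e : R) :
    kreinQuantity a e (e ^ 2 + e + 2 * a + 1) =
      a * (3 * e + 1) - a ^ 2 * (e - 1) - (a + 1) * e ^ 3 - 2 * e ^ 2 := by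
  unfold kreinQuantity
  ring

variable [LinearOrder R] [IsStrictOrderedRing R] {a e : R}

theorem kreinQuantity_threshold_neg (ha : 0 ≤ a) (he : 2 ≤ e) :
    kreinQuantity a e (e ^ 2 + e + 2 * a + 1) < 0 := by
  have hcube : 3 * e + 1 ≤ e ^ 3 := by
    nlinarith [mul_nonneg (sub_nonneg.2 he) (sq_nonneg (e + 1))]
  rw [kreinQuantity_threshold]
  nlinarith [mul_le_mul_of_nonneg_left hcube ha, sq_nonneg a]

theorem kreinQuantity_antitoneOn (ha : 0 ≤ a) (he : 1 ≤ e) :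
    AntitoneOn (kreinQuantity a e) (Set.Ici (e ^ 2 + e + 2 * a + 1)) := by
  intro d hd c hc hdc
  rw [Set.mem_Ici] at hd hc
  have hslope : e ^ 3 + (2 * a + 1) * e + a - e * (c + d) ≤ 0 := by nlinarith
  have hdiff := kreinQuantity_sub_kreinQuantity a e c d
  linarith [mul_nonpos_of_nonneg_of_nonpos (sub_nonneg.2 hdc) hslope]

theorem kreinQuantity_neg_of_threshold_le (ha : 0 ≤ a) (he : 2 ≤ e) {c : R}
    (hc : e ^ 2 + e + 2 * a + 1 ≤ c) : kreinQuantity a e c < 0 :=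
  (kreinQuantity_antitoneOn ha (by linarith) (Set.mem_Ici.2 le_rfl) (Set.mem_Ici.2 hc) hc).trans_lt
    (kreinQuantity_threshold_neg ha he)

end KreinQuantity

theorem krein_bound_e_ge_three_general (a e c : ℤ) (ha : 0 ≤ a) (he : 3 ≤ e)
    (hK : 0 ≤ (e + 1) * (e - a) * (e ^ 2 - e + a) + (e ^ 3 + (2 * a + 1) * e + a) * c - e * c ^ 2) :
    c ≤ e ^ 2 + e + 2 * a := by
  by_contra! hc
  exact (kreinQuantity_neg_of_threshold_le ha (by linarith) (by linarith)).not_ge hK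

/-- Krein bound: for integers `a ≥ 0`, `e ≥ 3`, `c ≥ 1`, with
`P = (e+1)(e−a)(e²−e+a)` and `Q = e³ + (2a+1)e + a`, if
`K₂(c) = P + Q·c − e·c² ≥ 0` then `c ≤ e² + e + 2a`. -/
theorem krein_bound_e_ge_three (a e c : ℤ) (ha : 0 ≤ a) (he : 3 ≤ e) (hc : 1 ≤ c)
    (hK : 0 ≤ (e + 1) * (e - a) * (e ^ 2 - e + a) + (e ^ 3 + (2 * a + 1) * e + a) * c - e * c ^ 2) :
    c ≤ e ^ 2 + e + 2 * a :=
  krein_bound_e_ge_three_general a e c ha he hK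
end

section
/- Let a ≥ 0, c ≥ 1 be integers and let e = 1 or e = 2, set P = (e+1)(e−a)(e²−e+a) and Q = e³ + (2a+1)e + a. If the Krein condition K₂(c) = P + Qc − ec² ≥ 0 holds, then c ≤ e² + e + 3a. -/
/-!
As a function of `c`, `K₂(c) = P + Q c - e c²` is a downward parabola. At `c₀ = e² + e + 3a + 1`
it is already negative and decreasing (`Q < 2 e c₀`), so it stays negative for all `c ≥ c₀`.
-/

namespace Krein

variable {R : Type*} [CommRing R]

def P (a e : R) : R := (e + 1) * (e - a) * (e ^ 2 - e + a)

def Q (a e : R) : R := e ^ 3 + (2 * a + 1) * e + a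

def K₂ (a e c : R) : R := P a e + Q a e * c - e * c ^ 2

theorem K₂_sub_K₂ (a e c c₀ : R) :
    K₂ a e c - K₂ a e c₀ = (c - c₀) * (Q a e - e * (c + c₀)) := by
  unfold K₂; ring

variable [LinearOrder R] [IsStrictOrderedRing R]

theorem K₂_neg_at_threshold {a e : R} (ha : 0 ≤ a) (he : 1 ≤ e) :
    K₂ a e (e ^ 2 + e + 3 * a + 1) < 0 := by
  have hexpand : K₂ a e (e ^ 2 + e + 3 * a + 1) =
      -(e ^ 3 + 2 * e ^ 2) - a * (2 * e ^ 3 + 2 * e ^ 2 - 2 * e - 1) - (4 * e - 2) * a ^ 2 := by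
    unfold K₂ P Q; ring
  have hcubic : 0 < e ^ 3 + 2 * e ^ 2 := by positivity
  have hlin : 0 ≤ 2 * e ^ 3 + 2 * e ^ 2 - 2 * e - 1 := by nlinarith
  rw [hexpand]
  nlinarith [mul_nonneg ha hlin, mul_nonneg (by linarith : (0 : R) ≤ 4 * e - 2) (sq_nonneg a)]

theorem Q_lt_at_threshold {a e : R} (ha : 0 ≤ a) (he : 1 ≤ e) :
    Q a e < 2 * e * (e ^ 2 + e + 3 * a + 1) := by
  have hexpand : 2 * e * (e ^ 2 + e + 3 * a + 1) - Q a e = e * (e + 1) ^ 2 + a * (4 * e - 1) := by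
    unfold Q; ring
  have : 0 < e * (e + 1) ^ 2 := by positivity
  nlinarith [mul_nonneg ha (by linarith : (0 : R) ≤ 4 * e - 1)]

theorem K₂_neg_of_threshold_le {a e c : R} (ha : 0 ≤ a) (he : 1 ≤ e)
    (hc : e ^ 2 + e + 3 * a + 1 ≤ c) : K₂ a e c < 0 := by
  set c₀ := e ^ 2 + e + 3 * a + 1
  have hslope : Q a e - e * (c + c₀) < 0 := by
    have := Q_lt_at_threshold ha he
    nlinarith [mul_le_mul_of_nonneg_left hc (by linarith : (0 : R) ≤ e)]
  have hstep : K₂ a e c - K₂ a e c₀ ≤ 0 := by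
    rw [K₂_sub_K₂]
    exact mul_nonpos_of_nonneg_of_nonpos (sub_nonneg.mpr hc) hslope.le
  linarith [K₂_neg_at_threshold ha he]

theorem lt_threshold_of_K₂_nonneg {a e c : R} (ha : 0 ≤ a) (he : 1 ≤ e) (hK : 0 ≤ K₂ a e c) :
    c < e ^ 2 + e + 3 * a + 1 :=
  lt_of_not_ge fun hc => (K₂_neg_of_threshold_le ha he hc).not_ge hK

end Krein

theorem krein_bound_e_one_two_general (a e c : ℤ) (ha : 0 ≤ a) (he : e = 1 ∨ e = 2)
    (hK : 0 ≤ (e + 1) * (e - a) * (e ^ 2 - e + a) + (e ^ 3 + (2 * a + 1) * e + a) * c - e * c ^ 2) :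
    c ≤ e ^ 2 + e + 3 * a := by
  have he₁ : 1 ≤ e := by omega
  exact Int.lt_add_one_iff.mp (Krein.lt_threshold_of_K₂_nonneg ha he₁ hK)

/-- Krein bound for `e = 1` or `e = 2`: for integers `a ≥ 0`, `c ≥ 1`, with
`P = (e+1)(e−a)(e²−e+a)` and `Q = e³ + (2a+1)e + a`, if
`K₂(c) = P + Q·c − e·c² ≥ 0` then `c ≤ e² + e + 3a`. -/
theorem krein_bound_e_one_two (a e c : ℤ) (ha : 0 ≤ a) (he : e = 1 ∨ e = 2) (hc : 1 ≤ c)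
    (hK : 0 ≤ (e + 1) * (e - a) * (e ^ 2 - e + a) + (e ^ 3 + (2 * a + 1) * e + a) * c - e * c ^ 2) :
    c ≤ e ^ 2 + e + 3 * a :=
  krein_bound_e_one_two_general a e c ha he hK
end

section
/- Let e ≥ 1 and c ≥ 1 be integers and take a = 0, so that P = e²(e+1)(e−1) and Q = e³ + e. If the Krein condition K₂(c) = P + Qc − ec² ≥ 0 holds, then c ≤ e(e+1). -/
/-!
For `a = 0` the Krein quantity factors as `K₂(c) = -e (c - e(e+1)) (c + e - 1)`, its roots being
`e(e+1)` and `1 - e`. For `e ≥ 1` any `c > e(e+1)` makes all three factors `e`, `c - e(e+1)`,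
`c + e - 1` positive, so `K₂(c) < 0`.
-/

theorem krein_triangle_free_eq {R : Type*} [CommRing R] (e c : R) :
    e ^ 2 * (e + 1) * (e - 1) + (e ^ 3 + e) * c - e * c ^ 2 =
      -(e * (c - e * (e + 1)) * (c + e - 1)) := by
  ring

theorem krein_bound_triangle_free_general (e c : ℤ) (he : 1 ≤ e)
    (hK : 0 ≤ e ^ 2 * (e + 1) * (e - 1) + (e ^ 3 + e) * c - e * c ^ 2) :
    c ≤ e * (e + 1) := by
  by_contra! hbig
  have hpos : 0 < e * (c - e * (e + 1)) * (c + e - 1) :=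
    mul_pos (mul_pos (by omega) (by omega)) (by nlinarith)
  rw [krein_triangle_free_eq] at hK
  omega

/-- Krein bound in the triangle-free case `a = 0`: for integers `e ≥ 1`, `c ≥ 1`, with
`P = e²(e+1)(e−1)` and `Q = e³ + e`, if `K₂(c) = P + Q·c − e·c² ≥ 0` then `c ≤ e(e+1)`. -/
theorem krein_bound_triangle_free (e c : ℤ) (he : 1 ≤ e) (hc : 1 ≤ c)
    (hK : 0 ≤ e ^ 2 * (e + 1) * (e - 1) + (e ^ 3 + e) * c - e * c ^ 2) :
    c ≤ e * (e + 1) :=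
  krein_bound_triangle_free_general e c he hK
end

section
/- Let A be a real symmetric n×n matrix, let e ∈ ℝ, and let m = n − rank(eI − A) be the multiplicity of e as an eigenvalue of A. Let Q be a set of n − m indices such that eI − A_Q is invertible, where A_Q is the principal submatrix of A on Q; let P be the complementary set of indices, A_P the principal submatrix of A on P, and B the Q×P block of A (so B_{qp} = A_{qp} for q ∈ Q, p ∈ P). Then eI − A_P = Bᵀ (eI − A_Q)⁻¹ B. -/
/-!
Put `M = e • 1 - A`, so `rank M = |Q|`. For `p, p' ∈ P`, the square submatrix of `M` on rows
`Q ∪ {p}` and columns `Q ∪ {p'}` has determinant `det M_Q * (M_{pp'} - (M_{PQ} M_Q⁻¹ M_{QP})_{pp'})`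
by the Schur complement formula. It has `|Q| + 1` rows but rank at most `rank M = |Q|`, so this
determinant vanishes and `M_P = M_{PQ} M_Q⁻¹ M_{QP}` entrywise. Finally `M_{QP} = -B`, and
`M_{PQ} = -Bᵀ` by symmetry.
-/

namespace Matrix

variable {K ι κ l m n α : Type*}

theorem submatrix_one_eq_zero [Zero α] [One α] [DecidableEq ι] {r : l → ι} {c : m → ι}
    (h : ∀ i j, r i ≠ c j) : (1 : Matrix ι ι α).submatrix r c = 0 := by
  ext i j
  exact one_apply_ne (h i j)

variable [Field K] [Fintype l] [DecidableEq l] [Fintype n]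

theorem eq_mul_inv_mul_of_rank_fromBlocks_le {D : Matrix l l K} (hD : IsUnit D)
    (B : Matrix l n K) (C : Matrix m l K) (E : Matrix m n K)
    (h : (fromBlocks D B C E).rank ≤ Fintype.card l) : E = C * D⁻¹ * B := by
  ext i j
  by_contra hne
  let := hD.invertible
  set N := (fromBlocks D B C E).submatrix (Sum.map id fun _ : Unit => i)
    (Sum.map id fun _ : Unit => j)
  have hN : N = fromBlocks D (B.submatrix id fun _ => j) (C.submatrix (fun _ => i) id)
      (of fun _ _ => E i j) := by
    ext (a | a) (b | b) <;> rfl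
  have hdet : N.det = D.det * (E i j - (C * D⁻¹ * B) i j) := by
    rw [hN, det_fromBlocks₁₁, det_unique (n := Unit), invOf_eq_nonsing_inv]
    simp [mul_apply]
  have hrankN : N.rank = Fintype.card l + 1 := by
    rw [rank_of_det_ne_zero (hdet ▸ mul_ne_zero ((isUnit_iff_isUnit_det D).mp hD).ne_zero
      (sub_ne_zero.mpr hne)), Fintype.card_sum, Fintype.card_unit]
  have hle : N.rank ≤ Fintype.card l := (rank_submatrix_le _ _ _).trans h
  omega

theorem submatrix_eq_mul_inv_mul_of_rank_le [Fintype κ] (M : Matrix ι κ K)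
    {rQ : l → ι} {cQ : l → κ} (rP : m → ι) (cP : n → κ) (hQ : IsUnit (M.submatrix rQ cQ))
    (h : M.rank ≤ Fintype.card l) :
    M.submatrix rP cP = M.submatrix rP cQ * (M.submatrix rQ cQ)⁻¹ * M.submatrix rQ cP := by
  refine eq_mul_inv_mul_of_rank_fromBlocks_le hQ _ _ _ ?_
  have hblocks : fromBlocks (M.submatrix rQ cQ) (M.submatrix rQ cP) (M.submatrix rP cQ)
      (M.submatrix rP cP) = M.submatrix (Sum.elim rQ rP) (Sum.elim cQ cP) := by
    ext (a | a) (b | b) <;> rfl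
  rw [hblocks]
  exact (rank_submatrix_le _ _ _).trans h

end Matrix

open Matrix in
/-- The Reconstruction Theorem of star complement theory: let `A` be a real symmetric
`n × n` matrix, `e ∈ ℝ`, and `m = n − rank(e•I − A)` the multiplicity of `e` as an
eigenvalue of `A`. If `Q` is a set of `n − m` indices such that `e•I − A_Q` is invertible
(where `A_Q` is the principal submatrix of `A` on `Q`), `P = Qᶜ`, `A_P` the principal
submatrix on `P`, and `B` the `Q × P` block of `A`, then
`e•I − A_P = Bᵀ (e•I − A_Q)⁻¹ B`. -/
theorem star_complement_reconstruction (n : ℕ) (A : Matrix (Fin n) (Fin n) ℝ)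
    (hA : A.IsSymm) (e : ℝ) (m : ℕ)
    (hm : m = n - (e • (1 : Matrix (Fin n) (Fin n) ℝ) - A).rank)
    (Q : Finset (Fin n)) (hQcard : Q.card = n - m)
    (hQinv : IsUnit (e • (1 : Matrix ↥Q ↥Q ℝ)
      - A.submatrix (Subtype.val : ↥Q → Fin n) (Subtype.val : ↥Q → Fin n))) :
    e • (1 : Matrix ↥(Qᶜ) ↥(Qᶜ) ℝ)
      - A.submatrix (Subtype.val : ↥(Qᶜ) → Fin n) (Subtype.val : ↥(Qᶜ) → Fin n)
    = (A.submatrix (Subtype.val : ↥Q → Fin n) (Subtype.val : ↥(Qᶜ) → Fin n))ᵀ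
      * (e • (1 : Matrix ↥Q ↥Q ℝ)
          - A.submatrix (Subtype.val : ↥Q → Fin n) (Subtype.val : ↥Q → Fin n))⁻¹
      * A.submatrix (Subtype.val : ↥Q → Fin n) (Subtype.val : ↥(Qᶜ) → Fin n) := by
  set M := e • (1 : Matrix (Fin n) (Fin n) ℝ) - A
  have hblock (S T : Finset (Fin n)) :
      M.submatrix (Subtype.val : S → Fin n) (Subtype.val : T → Fin n) =
        e • (1 : Matrix (Fin n) (Fin n) ℝ).submatrix Subtype.val Subtype.val -
          A.submatrix Subtype.val Subtype.val := rfl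
  have hdiag (S : Finset (Fin n)) :
      M.submatrix (Subtype.val : S → Fin n) Subtype.val =
        e • (1 : Matrix S S ℝ) - A.submatrix Subtype.val Subtype.val := by
    rw [hblock, submatrix_one _ Subtype.val_injective]
  have hQP : M.submatrix (Subtype.val : Q → Fin n) (Subtype.val : ↥(Qᶜ) → Fin n) =
      -A.submatrix Subtype.val Subtype.val := by
    rw [hblock, submatrix_one_eq_zero fun (q : Q) (p : ↥(Qᶜ)) (hqp : (q : Fin n) = p) =>
      Finset.mem_compl.mp p.2 (hqp ▸ q.2), smul_zero, zero_sub]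
  have hPQ : M.submatrix (Subtype.val : ↥(Qᶜ) → Fin n) (Subtype.val : Q → Fin n) =
      (M.submatrix Subtype.val Subtype.val)ᵀ := by
    have hM : M.IsSymm := (isSymm_one.smul e).sub hA
    rw [transpose_submatrix, hM.eq]
  have hrank : M.rank ≤ Fintype.card Q := by
    have := M.rank_le_width
    rw [Fintype.card_coe]
    omega
  have key := M.submatrix_eq_mul_inv_mul_of_rank_le (rQ := (Subtype.val : Q → Fin n))
    (cQ := Subtype.val) (Subtype.val : ↥(Qᶜ) → Fin n) (Subtype.val : ↥(Qᶜ) → Fin n)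
    (by rwa [hdiag]) hrank
  rwa [hdiag, hdiag, hPQ, hQP, transpose_neg, Matrix.mul_neg, Matrix.neg_mul, Matrix.neg_mul,
    neg_neg] at key
end

section
/- Let X be a strongly regular graph with parameters (n, k, a, c), where 3 ≤ k and 1 ≤ c < k, and let e ≥ 1 be an integer with c = e(e+1) and k = (e+1)c + e(e−a) (as integers). Then the eigenspace of the real adjacency matrix of X for the eigenvalue e has dimension n − k − 1. -/
open Module Polynomial Matrix

/-! `A² = k I + a A + c (J - I - A)` and `A J = k J` show that `(A - k)(A - e)(A - f)` vanishes,
where `f = a - c - e` is the second root of `x² - (a - c) x - (k - c)`. Hence `(A - k)(A - f)` is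
`(e - k)(e - f)` times a projection onto the `e`-eigenspace, and taking traces (`tr A = 0`,
`tr A² = n k`) gives `m (e - k)(e - f) = n k (1 + f)` for the multiplicity `m` of `e`. When
`c = e (e + 1)`, the counting identity `k (k - a - 1) = (n - k - 1) c` turns the right-hand side
into `(n - k - 1)(e - k)(e - f)`. -/

theorem Module.End.trace_aeval_eq_mul_finrank_eigenspace {K M : Type*} [Field K]
    [AddCommGroup M] [Module K M] [FiniteDimensional K M] {T : End K M} {μ : K} {q : K[X]}
    (hq : q.eval μ ≠ 0) (hT : aeval T ((X - C μ) * q) = 0) :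
    LinearMap.trace K M (aeval T q) = q.eval μ * finrank K (T.eigenspace μ) := by
  have hproj : LinearMap.IsProj (T.eigenspace μ) ((q.eval μ)⁻¹ • aeval T q) := by
    constructor
    · intro x
      refine Submodule.smul_mem _ _ (mem_eigenspace_iff.mpr ?_)
      have := LinearMap.congr_fun hT x
      simp only [map_mul, map_sub, aeval_X, aeval_C, End.mul_apply, LinearMap.sub_apply,
        LinearMap.zero_apply, Module.algebraMap_end_apply] at this
      exact sub_eq_zero.mp this
    · intro x hx
      rw [LinearMap.smul_apply, aeval_apply_of_mem_apply_eq_smul (mem_eigenspace_iff.mp hx),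
        inv_smul_smul₀ hq]
  rw [← hproj.trace, map_smul, smul_eq_mul, mul_inv_cancel_left₀ hq]

theorem Polynomial.aeval_X_sub_C_eq_sub_smul_one {R A : Type*} [CommRing R] [Ring A] [Algebra R A]
    (x : A) (r : R) : aeval x (X - C r) = x - r • 1 := by
  rw [map_sub, aeval_X, aeval_C, Algebra.algebraMap_eq_smul_one]

namespace SimpleGraph

variable {V : Type*} [Fintype V] {G : SimpleGraph V} [DecidableRel G.Adj]

theorem IsRegularOfDegree.adjMatrix_mul_of_one {R : Type*} [NonAssocSemiring R] {d : ℕ}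
    (h : G.IsRegularOfDegree d) : G.adjMatrix R * of 1 = (d : R) • of 1 := by
  ext v w
  simp [adjMatrix_mul_apply, h v]

namespace IsSRGWith

variable {n k a c : ℕ}

theorem param_eq_cast {R : Type*} [CommRing R] (h : G.IsSRGWith n k a c) (hn : 0 < n)
    (hk : 0 < k) : (k : R) * (k - a - 1) = (n - k - 1) * c := by
  obtain ⟨v⟩ : Nonempty V := by rwa [← Fintype.card_pos_iff, h.card]
  obtain ⟨w, hw⟩ : (G.neighborFinset v).Nonempty := by
    rwa [← Finset.card_pos, card_neighborFinset_eq_degree, h.regular v]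
  have hkn : k < n := h.card ▸ h.regular v ▸ G.degree_lt_card_verts v
  have hak : a < k := by
    have := ((mem_neighborFinset G v w).mp hw).card_commonNeighbors_lt_degree
    rwa [h.of_adj v w ((mem_neighborFinset G v w).mp hw), h.regular v] at this
  have := congrArg (Nat.cast : ℕ → R) (IsSRGWith.param_eq G h hn)
  push_cast [Nat.sub_sub, Nat.cast_sub (show a + 1 ≤ k by omega),
    Nat.cast_sub (show k + 1 ≤ n by omega)] at this
  linear_combination this

variable [DecidableEq V]

theorem trace_adjMatrix_sq {R : Type*} [CommRing R] (h : G.IsSRGWith n k a c) :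
    (G.adjMatrix R ^ 2).trace = n * k := by
  rw [h.matrix_eq, trace_add, trace_add, trace_smul, trace_smul, trace_smul, trace_one,
    trace_adjMatrix, trace_adjMatrix, h.card]
  simp [mul_comm]

theorem adjMatrix_sub_mul_sub_eq {R : Type*} [CommRing R] (h : G.IsSRGWith n k a c) {e : R}
    (hk : (k : R) = (e + 1) * c + e * (e - a)) :
    (G.adjMatrix R - e • 1) * (G.adjMatrix R - (a - c - e) • 1) = (c : R) • of 1 := by
  have hJ : of 1 = 1 + G.adjMatrix R + Gᶜ.adjMatrix R := by
    rw [add_assoc, IsCompl.adjMatrix_add_adjMatrix_eq_adjMatrix_completeGraph R isCompl_compl,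
      adjMatrix_completeGraph_eq_of_one_sub_one, add_sub_cancel]
  have hsq := h.matrix_eq (α := R)
  rw [← Nat.cast_smul_eq_nsmul R, ← Nat.cast_smul_eq_nsmul R, ← Nat.cast_smul_eq_nsmul R,
    hk] at hsq
  rw [hJ]
  simp only [sub_mul, mul_sub, smul_mul_assoc, mul_smul_comm, one_mul, mul_one, ← sq, hsq]
  match_scalars <;> ring

theorem aeval_adjMatrix_eq_zero {R : Type*} [CommRing R] (h : G.IsSRGWith n k a c) {e : R}
    (hk : (k : R) = (e + 1) * c + e * (e - a)) :
    aeval (G.adjMatrix R) ((X - C (k : R)) * ((X - C e) * (X - C (a - c - e)))) = 0 := by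
  rw [map_mul, map_mul, aeval_X_sub_C_eq_sub_smul_one, aeval_X_sub_C_eq_sub_smul_one,
    aeval_X_sub_C_eq_sub_smul_one, h.adjMatrix_sub_mul_sub_eq hk, mul_smul_comm, sub_mul,
    h.regular.adjMatrix_mul_of_one, smul_mul_assoc, one_mul, sub_self, smul_zero]

theorem trace_aeval_adjMatrix {R : Type*} [CommRing R] (h : G.IsSRGWith n k a c) (f : R) :
    (aeval (G.adjMatrix R) ((X - C (k : R)) * (X - C f))).trace = n * k * (1 + f) := by
  rw [map_mul, aeval_X_sub_C_eq_sub_smul_one, aeval_X_sub_C_eq_sub_smul_one]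
  simp only [sub_mul, mul_sub, smul_mul_assoc, mul_smul_comm, one_mul, mul_one, ← sq, trace_sub,
    trace_smul, trace_one, h.trace_adjMatrix_sq, trace_adjMatrix, h.card, smul_eq_mul]
  ring

theorem finrank_eigenspace_mul_eq {K : Type*} [Field K] (h : G.IsSRGWith n k a c) {e : K}
    (hk : (k : K) = (e + 1) * c + e * (e - a)) (hek : e ≠ k) (hef : e ≠ a - c - e) :
    (finrank K (End.eigenspace (toLin' (G.adjMatrix K)) e) : K) * ((e - k) * (e - (a - c - e)))
      = n * k * (1 + (a - c - e)) := by
  have htoLin (p : K[X]) : aeval (toLin' (G.adjMatrix K)) p = toLin' (aeval (G.adjMatrix K) p) :=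
    aeval_algHom_apply toLinAlgEquiv'.toAlgHom _ _
  have hq : ((X - C (k : K)) * (X - C (a - c - e))).eval e = (e - k) * (e - (a - c - e)) := by
    simp
  have hann : aeval (toLin' (G.adjMatrix K))
      ((X - C e) * ((X - C (k : K)) * (X - C (a - c - e)))) = 0 := by
    rw [mul_left_comm, htoLin, h.aeval_adjMatrix_eq_zero hk, map_zero]
  have := End.trace_aeval_eq_mul_finrank_eigenspace
    (hq ▸ mul_ne_zero (sub_ne_zero.mpr hek) (sub_ne_zero.mpr hef)) hann
  rw [htoLin, trace_toLin'_eq, h.trace_aeval_adjMatrix, hq] at this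
  rw [this, mul_comm]

end IsSRGWith

end SimpleGraph

theorem srg_multiplicity_identity {R : Type*} [CommRing R] [IsDomain R] {n k a c e : R}
    (he : e + 1 ≠ 0) (hce : c = e * (e + 1)) (hke : k = (e + 1) * c + e * (e - a))
    (hpar : k * (k - a - 1) = (n - k - 1) * c) :
    (n - k - 1) * ((e - k) * (e - (a - c - e))) = n * k * (1 + (a - c - e)) := by
  refine mul_left_cancel₀ he ?_
  subst hke hce
  linear_combination ((e + 1) * (e * (e + 1)) + e * (e - a) + 1) * hpar

theorem srg_eigenspace_dim_general {V : Type*} [Fintype V] [DecidableEq V]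
    (X : SimpleGraph V) [DecidableRel X.Adj]
    (n k a c : ℕ) (e : ℤ) (hX : X.IsSRGWith n k a c) (hck : c < k)
    (he : 1 ≤ e) (hce : (c : ℤ) = e * (e + 1))
    (hke : (k : ℤ) = (e + 1) * (c : ℤ) + e * (e - (a : ℤ))) :
    Module.finrank ℝ
        (Module.End.eigenspace (Matrix.toLin' (X.adjMatrix ℝ)) (e : ℝ))
      = n - k - 1 := by
  rcases n.eq_zero_or_pos with rfl | hn
  · simpa [hX.card] using Submodule.finrank_le (End.eigenspace (toLin' (X.adjMatrix ℝ)) (e : ℝ))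
  have heR : (1 : ℝ) ≤ e := by exact_mod_cast he
  have hceR : (c : ℝ) = e * (e + 1) := by exact_mod_cast hce
  have hkeR : (k : ℝ) = (e + 1) * c + e * (e - a) := by exact_mod_cast hke
  have hek : (e : ℝ) < k := by nlinarith [show (c : ℝ) < k by exact_mod_cast hck]
  have hef : 0 < (e : ℝ) - (a - c - e) := by
    have : (e : ℝ) * (e - (a - c - e)) = k - e := by rw [hkeR, hceR]; ring
    nlinarith
  have hmult := hX.finrank_eigenspace_mul_eq hkeR hek.ne (sub_pos.mp hef).ne'
  have hid := srg_multiplicity_identity (by linarith) hceR hkeR (hX.param_eq_cast hn (by omega))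
  have hm := mul_right_cancel₀ (mul_ne_zero (sub_neg.mpr hek).ne hef.ne') (hmult.trans hid.symm)
  rw [Nat.sub_sub]
  refine Nat.eq_sub_of_add_eq ?_
  exact_mod_cast (by linarith : (finrank ℝ (End.eigenspace (toLin' (X.adjMatrix ℝ)) (e : ℝ)) : ℝ)
    + (k + 1) = n)

/-- For a strongly regular graph `X` with parameters `(n, k, a, c)`, `3 ≤ k`, `1 ≤ c < k`,
and positive eigenvalue `e ≥ 1` with `c = e(e+1)` and `k = (e+1)c + e(e−a)`, the eigenspace
of the real adjacency matrix of `X` for the eigenvalue `e` has dimension `n − k − 1`. -/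
theorem srg_eigenspace_dim {V : Type*} [Fintype V] [DecidableEq V]
    (X : SimpleGraph V) [DecidableRel X.Adj]
    (n k a c : ℕ) (e : ℤ) (hX : X.IsSRGWith n k a c) (hk : 3 ≤ k) (hc : 1 ≤ c) (hck : c < k)
    (he : 1 ≤ e) (hce : (c : ℤ) = e * (e + 1))
    (hke : (k : ℤ) = (e + 1) * (c : ℤ) + e * (e - (a : ℤ))) :
    Module.finrank ℝ
        (Module.End.eigenspace (Matrix.toLin' (X.adjMatrix ℝ)) (e : ℝ))
      = n - k - 1 :=
  srg_eigenspace_dim_general X n k a c e hX hck he hce hke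
end

section
/- Let X be a strongly regular graph with parameters (n, k, a, c), where 3 ≤ k and 1 ≤ c < k, and let e be an integer with e > a ≥ 0, c = e(e+1) and k = (e+1)c + e(e−a) (as integers). Then for any vertex v of X, the real number e is not an eigenvalue of the adjacency matrix of the subgraph of X induced on the closed neighbourhood N = {v} ∪ X₁(v), where X₁(v) is the set of neighbours of v. (Combined with the multiplicity count, N is a star complement for e in X.) -/
/-!
The closed neighbourhood of `v` is the cone over the local graph at `v`, which is `a`-regular.
Summing the eigenvalue equations of an eigenvector `x` over the neighbours of `v` gives
`(k + a μ - μ ^ 2) x v = 0`, and for `μ = e` the coefficient is `(e + 1) c ≠ 0`, so `x v = 0`.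
Then `x` is an eigenvector of the local graph for `e`, and evaluating the equation at a
coordinate of maximal modulus bounds `|e|` by the degree `a < e`.
-/

instance induceAdjDecidable {V : Type*} (G : SimpleGraph V) [DecidableRel G.Adj]
    (s : Set V) : DecidableRel (G.induce s).Adj :=
  fun u v => inferInstanceAs (Decidable (G.Adj u v))

open Finset Matrix

namespace SimpleGraph

variable {V : Type*} (G : SimpleGraph V) [DecidableRel G.Adj]

theorem sum_sum_filter_adj_of_card_filter_adj_eq {M : Type*} [AddCommMonoid M] (s : Finset V)
    {a : ℕ} (hreg : ∀ u ∈ s, #(s.filter (G.Adj u)) = a) (y : V → M) :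
    ∑ w ∈ s, ∑ u ∈ s.filter (G.Adj w), y u = a • ∑ u ∈ s, y u := by
  rw [sum_comm' (t' := s) (s' := fun u => s.filter (G.Adj u))]
  · rw [smul_sum]
    refine sum_congr rfl fun u hu => ?_
    rw [sum_const, hreg u hu]
  · intro w u
    simp only [mem_filter, G.adj_comm]
    tauto

theorem abs_le_of_sum_filter_adj_eq_mul (s : Finset V) {a : ℕ}
    (hdeg : ∀ w ∈ s, #(s.filter (G.Adj w)) ≤ a) {y : V → ℝ} {μ : ℝ}
    (heig : ∀ w ∈ s, ∑ u ∈ s.filter (G.Adj w), y u = μ * y w) (hy : ∃ w ∈ s, y w ≠ 0) :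
    |μ| ≤ a := by
  obtain ⟨w, hw, hmax⟩ := s.exists_max_image (fun u => |y u|) (hy.imp fun _ h => h.1)
  have hpos : 0 < |y w| := by
    obtain ⟨u, hu, hyu⟩ := hy
    exact (abs_pos.mpr hyu).trans_le (hmax u hu)
  refine le_of_mul_le_mul_right ?_ hpos
  calc |μ| * |y w| = |∑ u ∈ s.filter (G.Adj w), y u| := by rw [heig w hw, abs_mul]
    _ ≤ ∑ u ∈ s.filter (G.Adj w), |y u| := abs_sum_le_sum_abs _ _
    _ ≤ #(s.filter (G.Adj w)) • |y w| :=
      sum_le_card_nsmul _ _ _ fun u hu => hmax u (mem_filter.mp hu).1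
    _ ≤ a * |y w| := by
      rw [nsmul_eq_mul]
      exact mul_le_mul_of_nonneg_right (by exact_mod_cast hdeg w hw) (abs_nonneg _)

theorem card_add_mul_sub_sq_mul_eq_zero (s : Finset V) {a : ℕ}
    (hreg : ∀ u ∈ s, #(s.filter (G.Adj u)) = a) {y : V → ℝ} {t μ : ℝ}
    (hapex : ∑ u ∈ s, y u = μ * t)
    (hbase : ∀ w ∈ s, t + ∑ u ∈ s.filter (G.Adj w), y u = μ * y w) :
    (#s + a * μ - μ ^ 2) * t = 0 := by
  have hsum := sum_congr rfl hbase
  rw [sum_add_distrib, sum_const, sum_sum_filter_adj_of_card_filter_adj_eq G s hreg,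
    ← mul_sum, hapex, nsmul_eq_mul, nsmul_eq_mul] at hsum
  linear_combination hsum

theorem sum_filter_adj_eq_mul_of_mulVec_induce {s : Set V} [Fintype s] {x : s → ℝ} {μ : ℝ}
    (hx : (G.induce s).adjMatrix ℝ *ᵥ x = μ • x) {y : V → ℝ} (hy : ∀ u : s, y u = x u)
    (w : s) : ∑ u ∈ s.toFinset.filter (G.Adj w), y u = μ * y w := by
  have := congrFun hx w
  simp only [mulVec, dotProduct, adjMatrix_apply, comap_adj, Function.Embedding.subtype_apply,
    ← hy, boole_mul, Pi.smul_apply, smul_eq_mul] at this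
  rw [sum_filter, ← sum_set_coe (f := fun u => if G.Adj w u then y u else 0)]
  exact this

section ClosedNeighborhood

variable [Fintype V] [DecidableEq V] (v : V)

theorem toFinset_singleton_union_neighborSet :
    ({v} ∪ G.neighborSet v : Set V).toFinset = insert v (G.neighborFinset v) := by
  ext u
  rw [Set.mem_toFinset]
  simp

theorem filter_adj_insert_neighborFinset_self :
    (insert v (G.neighborFinset v)).filter (G.Adj v) = G.neighborFinset v := by
  ext u
  simp +contextual

theorem filter_adj_insert_neighborFinset_of_adj {w : V} (hw : G.Adj v w) :
    (insert v (G.neighborFinset v)).filter (G.Adj w) =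
      insert v ((G.neighborFinset v).filter (G.Adj w)) := by
  rw [filter_insert, if_pos hw.symm]

theorem abs_le_of_hasEigenvalue_induce_singleton_union_neighborSet {a : ℕ}
    (hreg : ∀ w ∈ G.neighborFinset v, #((G.neighborFinset v).filter (G.Adj w)) = a) {μ : ℝ}
    (hμ : Module.End.HasEigenvalue
      (toLin' ((G.induce ({v} ∪ G.neighborSet v)).adjMatrix ℝ)) μ)
    (hcoef : (G.degree v + a * μ - μ ^ 2 : ℝ) ≠ 0) :
    |μ| ≤ a := by
  obtain ⟨x, hx⟩ := hμ.exists_hasEigenvector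
  set y : V → ℝ := Function.extend Subtype.val x 0
  have hy : ∀ u : ({v} ∪ G.neighborSet v : Set V), y u = x u :=
    Subtype.val_injective.extend_apply x 0
  have heig : ∀ w ∈ insert v (G.neighborFinset v),
      ∑ u ∈ (insert v (G.neighborFinset v)).filter (G.Adj w), y u = μ * y w := by
    intro w hw
    rw [← toFinset_singleton_union_neighborSet] at hw ⊢
    exact G.sum_filter_adj_eq_mul_of_mulVec_induce (toLin'_apply _ x ▸ hx.apply_eq_smul) hy
      ⟨w, Set.mem_toFinset.mp hw⟩
  have hapex : ∑ u ∈ G.neighborFinset v, y u = μ * y v := by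
    simpa only [filter_adj_insert_neighborFinset_self] using heig v (mem_insert_self _ _)
  have hbase : ∀ w ∈ G.neighborFinset v,
      y v + ∑ u ∈ (G.neighborFinset v).filter (G.Adj w), y u = μ * y w := by
    intro w hw
    have hadj : G.Adj v w := (G.mem_neighborFinset v w).mp hw
    rw [← sum_insert fun h => G.notMem_neighborFinset_self v (mem_filter.mp h).1,
      ← filter_adj_insert_neighborFinset_of_adj G v hadj]
    exact heig w (mem_insert_of_mem hw)
  have hyv : y v = 0 := by
    refine (mul_eq_zero.mp ?_).resolve_left hcoef
    rw [← card_neighborFinset_eq_degree]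
    exact G.card_add_mul_sub_sq_mul_eq_zero _ hreg hapex hbase
  have hy_ne : ∃ w ∈ G.neighborFinset v, y w ≠ 0 := by
    obtain ⟨⟨u, hu⟩, hxu⟩ := Function.ne_iff.mp hx.2
    rcases hu with rfl | hu
    · exact absurd (hy ⟨u, _⟩ ▸ hyv) hxu
    · exact ⟨u, (G.mem_neighborFinset v u).mpr hu, hy ⟨u, _⟩ ▸ hxu⟩
  refine G.abs_le_of_sum_filter_adj_eq_mul _ (fun w hw => (hreg w hw).le) (fun w hw => ?_) hy_ne
  simpa only [hyv, zero_add] using hbase w hw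

end ClosedNeighborhood

variable {G} in
theorem IsSRGWith.card_filter_adj_neighborFinset [Fintype V] {n k ℓ m : ℕ}
    (h : G.IsSRGWith n k ℓ m) {v w : V} (hw : w ∈ G.neighborFinset v) :
    #((G.neighborFinset v).filter (G.Adj w)) = ℓ := by
  rw [← h.of_adj v w ((G.mem_neighborFinset v w).mp hw), ← Set.toFinset_card]
  congr 1
  ext u
  simp [mem_commonNeighbors]

end SimpleGraph

theorem srg_closed_neighbourhood_star_complement_general {V : Type*} [Fintype V] [DecidableEq V]
    (X : SimpleGraph V) [DecidableRel X.Adj]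
    (n k a c : ℕ) (e : ℤ) (hX : X.IsSRGWith n k a c) (hc : 1 ≤ c)
    (hea : (a : ℤ) < e)
    (hke : (k : ℤ) = (e + 1) * (c : ℤ) + e * (e - (a : ℤ)))
    (v : V) :
    ¬ Module.End.HasEigenvalue
        (Matrix.toLin' ((X.induce ({v} ∪ X.neighborSet v)).adjMatrix ℝ)) (e : ℝ) := by
  intro he
  have hcoef : ((X.degree v : ℕ) + a * e - e ^ 2 : ℝ) ≠ 0 := by
    have hkey : (k : ℤ) + a * e - e ^ 2 = (e + 1) * c := by rw [hke]; ring
    have hpos : 0 < (e + 1) * (c : ℤ) := mul_pos (by omega) (by omega)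
    rw [hX.regular v]
    exact_mod_cast (hkey ▸ hpos).ne'
  have habs := X.abs_le_of_hasEigenvalue_induce_singleton_union_neighborSet v
    (fun w hw => hX.card_filter_adj_neighborFinset hw) he hcoef
  have hea' : (a : ℝ) < e := by exact_mod_cast hea
  exact ((le_abs_self _).trans habs).not_gt hea'

/-- For a strongly regular graph `X` with parameters `(n, k, a, c)`, `3 ≤ k`, `1 ≤ c < k`,
and positive eigenvalue `e > a ≥ 0` with `c = e(e+1)` and `k = (e+1)c + e(e−a)`, for any
vertex `v` the real number `e` is not an eigenvalue of the adjacency matrix of the subgraph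
induced on the closed neighbourhood `N = {v} ∪ X₁(v)`; hence `N` is a star complement
for `e` in `X`. -/
theorem srg_closed_neighbourhood_star_complement {V : Type*} [Fintype V] [DecidableEq V]
    (X : SimpleGraph V) [DecidableRel X.Adj]
    (n k a c : ℕ) (e : ℤ) (hX : X.IsSRGWith n k a c) (hk : 3 ≤ k) (hc : 1 ≤ c) (hck : c < k)
    (hea : (a : ℤ) < e) (hce : (c : ℤ) = e * (e + 1))
    (hke : (k : ℤ) = (e + 1) * (c : ℤ) + e * (e - (a : ℤ)))
    (v : V) :
    ¬ Module.End.HasEigenvalue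
        (Matrix.toLin' ((X.induce ({v} ∪ X.neighborSet v)).adjMatrix ℝ)) (e : ℝ) :=
  srg_closed_neighbourhood_star_complement_general X n k a c e hX hc hea hke v
end

section
/- Let G be an a-regular finite simple graph on k vertices with real adjacency matrix A_G, and let Ĝ be the cone over G, i.e., the graph obtained by joining one new vertex to every vertex of G, with real adjacency matrix A_Ĝ. Then in ℝ[X] the characteristic polynomials satisfy (X − a)·charpoly(A_Ĝ) = (X² − aX − k)·charpoly(A_G). -/
/-!
In the characteristic matrix of the cone, add `X - a` times the column of the apex to the sum of
all other columns. Since every row of `A_G` sums to `a` and the apex is joined to every vertex,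
this clears the new column below the apex and puts `X (X - a) - k` at the apex; the determinant
was multiplied by `X - a`, and the resulting block-triangular matrix has determinant
`(X² - aX - k) · charpoly(A_G)`.
-/

/-- The cone over a graph `G`: one new vertex joined to every vertex of `G`. -/
def SimpleGraph.cone {V : Type*} (G : SimpleGraph V) : SimpleGraph (Option V) where
  Adj x y :=
    match x, y with
    | none, none => False
    | none, some _ => True
    | some _, none => True
    | some u, some v => G.Adj u v
  symm := ⟨by rintro (_ | u) (_ | v) h <;> first | trivial | exact G.adj_symm h⟩
  loopless := ⟨by rintro (_ | u) h; exacts [h, G.irrefl h]⟩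

instance {V : Type*} (G : SimpleGraph V) [DecidableRel G.Adj] :
    DecidableRel G.cone.Adj := fun x y =>
  match x, y with
  | none, none => isFalse id
  | none, some _ => isTrue trivial
  | some _, none => isTrue trivial
  | some u, some v => inferInstanceAs (Decidable (G.Adj u v))

namespace Matrix

open Polynomial

variable {n R : Type*} [Fintype n] [DecidableEq n] [CommRing R]

theorem det_eq_mul_det_submatrix_some_of_apply_some_none (M : Matrix (Option n) (Option n) R)
    (h : ∀ i, M (some i) none = 0) : M.det = M none none * (M.submatrix some some).det := by
  let e : n ⊕ Unit ≃ Option n := (Equiv.optionEquivSumPUnit n).symm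
  have hblocks : M.submatrix e e = fromBlocks (M.submatrix some some)
      (of fun i _ => M (some i) none) (of fun _ j => M none (some j)) (of fun _ _ => M none none) := by
    ext (i | i) (j | j) <;> rfl
  rw [← det_submatrix_equiv_self e, hblocks, show (of fun i (_ : Unit) => M (some i) none) = 0 from
    funext₂ fun i _ => h i, det_fromBlocks_zero₁₂, det_unique (of _), mul_comm]
  rfl

theorem charmatrix_submatrix {m : Type*} [Fintype m] [DecidableEq m] (M : Matrix n n R)
    (e : m → n) (he : Function.Injective e) :
    (charmatrix M).submatrix e e = charmatrix (M.submatrix e e) := by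
  ext i j
  simp [charmatrix_apply, diagonal_apply, he.eq_iff]

theorem sum_charmatrix_apply (M : Matrix n n R) (i : n) :
    ∑ j, charmatrix M i j = X - C (∑ j, M i j) := by
  simp [charmatrix_apply, diagonal_apply, Finset.sum_sub_distrib]

theorem X_sub_C_mul_charpoly_of_option_border (B : Matrix (Option n) (Option n) R) (r : R)
    (hrow : ∀ i, ∑ j, B (some i) (some j) = r) (hcol : ∀ i, B (some i) none = 1) :
    (X - C r) * B.charpoly = ((X - C (B none none)) * (X - C r) - C (∑ j, B none (some j))) *
      (B.submatrix some some).charpoly := by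
  set p := (X - C (B none none)) * (X - C r) - C (∑ j, B none (some j))
  let c : Option n → R[X] := fun j => j.elim (X - C r) fun _ => 1
  have hsome : (charmatrix B).submatrix some some = charmatrix (B.submatrix some some) :=
    charmatrix_submatrix B some (Option.some_injective n)
  have hsum : ∀ i, ∑ j, charmatrix B (some i) (some j) = X - C r := fun i => by
    simpa only [← hsome, submatrix_apply, hrow] using sum_charmatrix_apply (B.submatrix some some) i
  have hcomb : ∀ i, ∑ j, c j • charmatrix B i j = i.elim p fun _ => 0 := by
    rintro (_ | i) <;> rw [Fintype.sum_option] <;> simp only [c, Option.elim, smul_eq_mul, one_mul]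
    · simp only [charmatrix_apply_eq, ne_eq, reduceCtorEq, not_false_eq_true, charmatrix_apply_ne,
        Finset.sum_neg_distrib, map_sum, p]
      ring
    · rw [charmatrix_apply_ne _ _ _ (Option.some_ne_none i), hcol, hsum, map_one]
      ring
  have hdet := det_updateCol_sum (charmatrix B) none c
  simp only [hcomb] at hdet
  have hminor : ((charmatrix B).updateCol none fun k => k.elim p fun _ => 0).submatrix some some =
      charmatrix (B.submatrix some some) := by
    rw [← hsome]
    ext i j : 1
    rw [submatrix_apply, submatrix_apply, updateCol_ne (Option.some_ne_none j)]
  rw [det_eq_mul_det_submatrix_some_of_apply_some_none _ fun _ => updateCol_self, hminor,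
    updateCol_self] at hdet
  exact hdet.symm

end Matrix

namespace SimpleGraph

theorem IsRegularOfDegree.sum_adjMatrix_apply {V R : Type*} [Fintype V] [NonAssocSemiring R]
    {G : SimpleGraph V} [DecidableRel G.Adj] {d : ℕ} (hd : G.IsRegularOfDegree d) (v : V) :
    ∑ w, G.adjMatrix R v w = d := by
  simpa [Matrix.mulVec, dotProduct] using adjMatrix_mulVec_const_apply_of_regular (a := (1 : R)) hd
    (v := v)

variable {V : Type*} (G : SimpleGraph V) [DecidableRel G.Adj] (R : Type*) [Zero R] [One R]

def coneEmbedding : G ↪g G.cone := ⟨Function.Embedding.some, Iff.rfl⟩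

theorem adjMatrix_cone_submatrix_some :
    (G.cone.adjMatrix R).submatrix some some = G.adjMatrix R :=
  (coneEmbedding G).submatrix_adjMatrix R

theorem adjMatrix_cone_none_none : G.cone.adjMatrix R none none = 0 :=
  if_neg (t := 1) id

theorem adjMatrix_cone_none_some (v : V) : G.cone.adjMatrix R none (some v) = 1 :=
  if_pos (e := 0) trivial

theorem adjMatrix_cone_some_none (v : V) : G.cone.adjMatrix R (some v) none = 1 :=
  if_pos (e := 0) trivial

end SimpleGraph

open Polynomial in
/-- If `G` is an `a`-regular graph on `k` vertices and `Ĝ` is the cone over `G`, then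
`(X − a)·charpoly(A_Ĝ) = (X² − aX − k)·charpoly(A_G)` in `ℝ[X]`. -/
theorem cone_charpoly {V : Type*} [Fintype V] [DecidableEq V]
    (G : SimpleGraph V) [DecidableRel G.Adj] (a k : ℕ)
    (hcard : Fintype.card V = k) (hreg : G.IsRegularOfDegree a) :
    (X - C (a : ℝ)) * (G.cone.adjMatrix ℝ).charpoly
      = (X ^ 2 - C (a : ℝ) * X - C (k : ℝ)) * (G.adjMatrix ℝ).charpoly := by
  rw [Matrix.X_sub_C_mul_charpoly_of_option_border _ _ hreg.sum_adjMatrix_apply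
      (G.adjMatrix_cone_some_none ℝ), G.adjMatrix_cone_submatrix_some, G.adjMatrix_cone_none_none]
  simp only [G.adjMatrix_cone_none_some, Finset.sum_const, Finset.card_univ, hcard, nsmul_eq_mul,
    mul_one, map_natCast, map_zero, sub_zero]
  ring
end

section
/- Let p be a prime, m ≥ 1, q = p^m, and let F be a finite field of characteristic p with exactly q² elements. Then the number of 2×2 matrices M over F that are Hermitian (i.e., M_{ji} = (M_{ij})^q for all i, j), nonzero, and singular (det M = 0) is exactly (q − 1)(q² + 1). -/
/-!
A `q`-Hermitian `2 × 2` matrix is `!![a, b; b ^ q, d]` with `a, d` in the set `K` of fixed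
points of `x ↦ x ^ q`, which has `q` elements since `F` has `q²`; it is singular iff
`a * d = b ^ (q + 1)`. The norm `b ^ (q + 1)` lies in `K`, so for `b = 0` there are `2q - 1`
pairs `(a, d)` and for `b ≠ 0` there are `q - 1`. Altogether there are
`(2q - 1) + (q² - 1)(q - 1) = (q - 1)(q² + 1) + 1` singular Hermitian matrices, one of which is
zero.
-/

open Finset

namespace Finset

theorem card_filter_product {α β : Type*} (s : Finset α) (t : Finset β) (p : α × β → Prop)
    [DecidablePred p] : #{x ∈ s ×ˢ t | p x} = ∑ a ∈ s, #{b ∈ t | p (a, b)} := by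
  simp only [card_filter, sum_product]

theorem card_filter_mul_eq_zero {M₀ : Type*} [MulZeroClass M₀] [NoZeroDivisors M₀]
    [DecidableEq M₀] {s : Finset M₀} (h0 : 0 ∈ s) :
    #{x ∈ s ×ˢ s | x.1 * x.2 = 0} = 2 * #s - 1 := by
  have hunion : {x ∈ s ×ˢ s | x.1 * x.2 = 0} = {0} ×ˢ s ∪ s ×ˢ {0} := by
    ext ⟨a, d⟩
    simp only [mem_filter, mem_product, mul_eq_zero, mem_union, mem_singleton]
    constructor
    · rintro ⟨⟨ha, hd⟩, rfl | rfl⟩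
      exacts [Or.inl ⟨rfl, hd⟩, Or.inr ⟨ha, rfl⟩]
    · rintro (⟨rfl, hd⟩ | ⟨ha, rfl⟩)
      exacts [⟨⟨h0, hd⟩, Or.inl rfl⟩, ⟨⟨ha, h0⟩, Or.inr rfl⟩]
  have hinter : {0} ×ˢ s ∩ s ×ˢ {0} = {(0, 0)} := by
    rw [product_inter_product, singleton_inter_of_mem h0, inter_singleton_of_mem h0,
      singleton_product_singleton]
  have := card_union_add_card_inter ({0} ×ˢ s) (s ×ˢ {0})
  rw [← hunion, hinter, card_singleton, card_product, card_product, card_singleton] at this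
  omega

theorem card_filter_mul_eq_of_ne_zero {G₀ : Type*} [CommGroupWithZero G₀] [DecidableEq G₀]
    {s : Finset G₀} {c : G₀} (hc : c ≠ 0) (hs : ∀ x ∈ s, x ≠ 0 → c / x ∈ s) :
    #{x ∈ s ×ˢ s | x.1 * x.2 = c} = #(s.erase 0) := by
  refine card_nbij' Prod.fst (fun a => (a, c / a)) ?_ ?_ ?_ ?_
  · rintro ⟨a, d⟩ h
    simp only [mem_coe, mem_filter, mem_product, mem_erase] at h ⊢
    exact ⟨by rintro rfl; exact hc (by simp [← h.2]), h.1.1⟩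
  · intro a h
    simp only [mem_coe, mem_filter, mem_product, mem_erase] at h ⊢
    exact ⟨⟨h.2, hs a h.2 h.1⟩, mul_div_cancel₀ c h.1⟩
  · rintro ⟨a, d⟩ h
    simp only [mem_coe, mem_filter] at h
    have ha : a ≠ 0 := by rintro rfl; exact hc (by simp [← h.2])
    simp [← h.2, ha]
  · intro a _
    rfl

end Finset

namespace Matrix
variable {R : Type*} [CommRing R] {q : ℕ}

theorem setOf_hermitian_det_eq_zero_fin_two (hR : ∀ x : R, x ^ q ^ 2 = x) :
    {M : Matrix (Fin 2) (Fin 2) R | (∀ i j, M j i = M i j ^ q) ∧ M.det = 0} =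
      (fun t : R × R × R => !![t.2.1, t.1; t.1 ^ q, t.2.2]) ''
        {t | t.2.1 ^ q = t.2.1 ∧ t.2.2 ^ q = t.2.2 ∧ t.2.1 * t.2.2 = t.1 ^ (q + 1)} := by
  ext M
  constructor
  · rintro ⟨hM, hdet⟩
    have h10 : M 1 0 = M 0 1 ^ q := hM 0 1
    refine ⟨(M 0 1, M 0 0, M 1 1), ⟨(hM 0 0).symm, (hM 1 1).symm, ?_⟩, ?_⟩
    · rw [det_fin_two, h10, sub_eq_zero] at hdet
      rw [hdet, pow_succ']
    · change !![M 0 0, M 0 1; M 0 1 ^ q, M 1 1] = M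
      rw [← h10, ← eta_fin_two]
  · rintro ⟨⟨b, a, d⟩, ⟨ha, hd, hdet⟩, rfl⟩
    refine ⟨fun i j => ?_, ?_⟩
    · fin_cases i <;> fin_cases j
      · exact ha.symm
      · rfl
      · simp [← pow_mul, ← sq, hR]
      · exact hd.symm
    · simp [det_fin_two_of, hdet, pow_succ']

theorem ncard_setOf_hermitian_det_eq_zero_fin_two (hR : ∀ x : R, x ^ q ^ 2 = x) :
    {M : Matrix (Fin 2) (Fin 2) R | (∀ i j, M j i = M i j ^ q) ∧ M.det = 0}.ncard =
      {t : R × R × R | t.2.1 ^ q = t.2.1 ∧ t.2.2 ^ q = t.2.2 ∧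
        t.2.1 * t.2.2 = t.1 ^ (q + 1)}.ncard := by
  rw [setOf_hermitian_det_eq_zero_fin_two hR]
  refine Set.ncard_image_of_injective _ ?_
  rintro ⟨b, a, d⟩ ⟨b', a', d'⟩ h
  have h00 := congrFun₂ h 0 0
  have h01 := congrFun₂ h 0 1
  have h11 := congrFun₂ h 1 1
  simp_all

end Matrix

namespace FiniteField
variable {F : Type*} [Field F] [Fintype F]

theorem card_nthRootsFinset_one_of_dvd {n : ℕ} (hn : n ∣ Fintype.card F - 1) :
    #(Polynomial.nthRootsFinset n (1 : F)) = n := by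
  classical
  obtain ⟨g, hg⟩ := IsCyclic.exists_ofOrder_eq_natCard (α := Fˣ)
  rw [Nat.card_eq_fintype_card, Fintype.card_units] at hg
  obtain ⟨k, hk⟩ := hn
  have hζ : IsPrimitiveRoot (g : F) (Fintype.card F - 1) :=
    IsPrimitiveRoot.coe_units_iff.mpr (hg ▸ IsPrimitiveRoot.orderOf g)
  have hpos : 0 < Fintype.card F - 1 := by have := Fintype.one_lt_card (α := F); omega
  exact (hζ.pow hpos (hk.trans (mul_comm _ _))).card_nthRootsFinset

theorem card_filter_pow_eq_self_of_dvd [DecidableEq F] {n : ℕ}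
    (hn : n - 1 ∣ Fintype.card F - 1) :
    #{x : F | x ^ n = x} = n := by
  have hn1 : 0 < n - 1 := by
    refine Nat.pos_of_ne_zero fun h => ?_
    have := Fintype.one_lt_card (α := F)
    rw [h, zero_dvd_iff] at hn
    omega
  have hroots : ({x : F | x ^ n = x} : Finset F) =
      insert 0 (Polynomial.nthRootsFinset (n - 1) (1 : F)) := by
    ext x
    rw [mem_insert, Polynomial.mem_nthRootsFinset hn1, mem_filter_univ]
    have hsucc : x ^ n = x ^ (n - 1) * x := by rw [← pow_succ, Nat.sub_add_cancel (by omega)]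
    rcases eq_or_ne x 0 with rfl | hx
    · simp [zero_pow (by omega : n ≠ 0)]
    · rw [hsucc, mul_eq_right₀ hx]
      simp [hx]
  rw [hroots, card_insert_of_notMem, card_nthRootsFinset_one_of_dvd hn]
  · omega
  · simp [Polynomial.mem_nthRootsFinset hn1, zero_pow hn1.ne']

theorem ncard_setOf_mul_eq_pow_succ {q : ℕ} (hcard : Fintype.card F = q ^ 2) :
    {t : F × F × F | t.2.1 ^ q = t.2.1 ∧ t.2.2 ^ q = t.2.2 ∧
      t.2.1 * t.2.2 = t.1 ^ (q + 1)}.ncard = (q - 1) * (q ^ 2 + 1) + 1 := by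
  have := Classical.decEq F
  set K : Finset F := {x | x ^ q = x}
  have hq : 2 ≤ q := by
    have := Fintype.one_lt_card (α := F)
    rw [hcard] at this
    nlinarith
  have hK : #K = q := card_filter_pow_eq_self_of_dvd <| by
    rw [hcard]
    exact ⟨q + 1, by rw [mul_comm]; simpa using Nat.sq_sub_sq q 1⟩
  have hnorm : ∀ b : F, (b ^ (q + 1)) ^ q = b ^ (q + 1) := fun b => by
    rw [← pow_mul, add_mul, one_mul, ← sq, pow_add, ← hcard, pow_card, pow_succ']
  have hfiber : ∀ b : F, #{x ∈ K ×ˢ K | x.1 * x.2 = b ^ (q + 1)} =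
      if b = 0 then 2 * q - 1 else q - 1 := fun b => by
    split_ifs with hb
    · rw [hb, zero_pow (Nat.succ_ne_zero q), card_filter_mul_eq_zero (by simp [K]; omega), hK]
    · rw [card_filter_mul_eq_of_ne_zero (pow_ne_zero _ hb), card_erase_of_mem (by simp [K]; omega),
        hK]
      simp only [K, mem_filter_univ]
      intro x hx _
      rw [div_pow, hx, hnorm]
  have hset : {t : F × F × F | t.2.1 ^ q = t.2.1 ∧ t.2.2 ^ q = t.2.2 ∧
      t.2.1 * t.2.2 = t.1 ^ (q + 1)} =
        ↑{t ∈ (univ : Finset F) ×ˢ (K ×ˢ K) | t.2.1 * t.2.2 = t.1 ^ (q + 1)} := by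
    ext t
    simp [K, and_assoc]
  rw [hset, Set.ncard_coe_finset, card_filter_product, sum_congr rfl fun b _ => hfiber b, sum_ite]
  simp only [filter_eq', filter_ne', mem_univ, if_true, sum_const, card_singleton,
    card_erase_of_mem, card_univ, hcard, smul_eq_mul, one_mul]
  have : 1 ≤ q ^ 2 := Nat.one_le_pow _ _ (by omega)
  zify [this, (by omega : 1 ≤ q), (by omega : 1 ≤ 2 * q)]
  ring

end FiniteField

theorem card_nonzero_singular_hermitian_general
    (q : ℕ)
    (F : Type*) [Field F] [Fintype F]
    (hcard : Fintype.card F = q ^ 2) :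
    Set.ncard {M : Matrix (Fin 2) (Fin 2) F |
        (∀ i j, M j i = (M i j) ^ q) ∧ M ≠ 0 ∧ M.det = 0}
      = (q - 1) * (q ^ 2 + 1) := by
  have hq : q ≠ 0 := by
    rintro rfl
    exact Fintype.card_ne_zero (hcard.trans (zero_pow two_ne_zero))
  have hzero : (0 : Matrix (Fin 2) (Fin 2) F) ∈
      {M : Matrix (Fin 2) (Fin 2) F | (∀ i j, M j i = M i j ^ q) ∧ M.det = 0} := by
    simp [zero_pow hq]
  have hset :
      {M : Matrix (Fin 2) (Fin 2) F | (∀ i j, M j i = M i j ^ q) ∧ M ≠ 0 ∧ M.det = 0} =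
      {M : Matrix (Fin 2) (Fin 2) F | (∀ i j, M j i = M i j ^ q) ∧ M.det = 0} \ {0} := by
    ext M
    simp only [Set.mem_ofPred_eq, Set.mem_sdiff, Set.mem_singleton_iff]
    tauto
  rw [hset, Set.ncard_sdiff_singleton_of_mem hzero,
    Matrix.ncard_setOf_hermitian_det_eq_zero_fin_two fun x => hcard ▸ FiniteField.pow_card x,
    FiniteField.ncard_setOf_mul_eq_pow_succ hcard, Nat.add_sub_cancel]

/-- Over a finite field `F` with `q²` elements (`q = p^m`, `p = char F` prime), the number of
`2 × 2` Hermitian matrices (`M_{ji} = (M_{ij})^q` for all `i, j`) that are nonzero and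
singular is exactly `(q − 1)(q² + 1)`. -/
theorem card_nonzero_singular_hermitian (p m : ℕ) (hp : p.Prime) (hm : 1 ≤ m)
    (q : ℕ) (hq : q = p ^ m)
    (F : Type*) [Field F] [Fintype F] (hchar : CharP F p)
    (hcard : Fintype.card F = q ^ 2) :
    Set.ncard {M : Matrix (Fin 2) (Fin 2) F |
        (∀ i j, M j i = (M i j) ^ q) ∧ M ≠ 0 ∧ M.det = 0}
      = (q - 1) * (q ^ 2 + 1) :=
  card_nonzero_singular_hermitian_general q F hcard
end

section
/- Let p be a prime, m ≥ 1, q = p^m, and let F be a finite field of characteristic p with exactly q² elements. Let M and M' be two distinct nonzero singular Hermitian 2×2 matrices over F (i.e., M_{ji} = (M_{ij})^q for all i, j, M ≠ 0, det M = 0, and likewise for M'). Then det(M − M') = 0 if and only if M' = α·M for some α ∈ F with α^q = α. (Consequently the subgraph induced on the nonzero singular Hermitian matrices in the Cayley graph consists of q² + 1 disjoint cliques of size q − 1, namely the sets {αM : α ≠ 0, α^q = α}.) -/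
/-!
Write `σ` for the conjugation `x ↦ x ^ q`. A singular `σ`-Hermitian matrix `M = [a b; σb d]`
has `σ`-fixed diagonal and `a d = b σb`; if `a = 0` then `b = 0`, so a nonzero one has a nonzero
diagonal entry, which after swapping the coordinates we may take to be `a`. For a second such
matrix `M' = [a' b'; σb' d']`, the element `x = a b' - a' b` satisfies
`x σx = -a a' det (M - M')`, and `x σx = 0` forces `x = 0`. So `det (M - M') = 0` gives
`b' = (a' / a) b`, then `d' = (a' / a) d`, and `a' / a` is `σ`-fixed.
-/

namespace Matrix

variable {R : Type*} [CommRing R] {n : Type*}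

def IsHermitianWrt (σ : R →+* R) (M : Matrix n n R) : Prop :=
  ∀ i j, M j i = σ (M i j)

variable {σ : R →+* R} {M M' : Matrix n n R}

theorem IsHermitianWrt.map_apply_self (hM : M.IsHermitianWrt σ) (i : n) : σ (M i i) = M i i :=
  (hM i i).symm

theorem IsHermitianWrt.submatrix (hM : M.IsHermitianWrt σ) {m : Type*} (f : m → n) :
    (M.submatrix f f).IsHermitianWrt σ :=
  fun i j => hM (f i) (f j)

theorem IsHermitianWrt.sub (hM : M.IsHermitianWrt σ) (hM' : M'.IsHermitianWrt σ) :
    (M - M').IsHermitianWrt σ :=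
  fun i j => by rw [sub_apply, sub_apply, map_sub, hM, hM']

theorem IsHermitianWrt.det_fin_two {M : Matrix (Fin 2) (Fin 2) R} (hM : M.IsHermitianWrt σ) :
    M.det = M 0 0 * M 1 1 - M 0 1 * σ (M 0 1) := by
  rw [Matrix.det_fin_two, hM 0 1]

theorem det_sub_smul_self_eq_zero [Fintype n] [DecidableEq n] (hM : M.det = 0) (α : R) :
    (M - α • M).det = 0 := by
  rw [← one_smul R M, smul_smul, mul_one, ← sub_smul, det_smul, hM, mul_zero]

end Matrix

theorem RingHom.eq_zero_of_mul_map_self_eq_zero {F : Type*} [Field F] (σ : F →+* F) {x : F}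
    (hx : x * σ x = 0) : x = 0 :=
  (mul_eq_zero.1 hx).elim _root_.id (map_eq_zero σ).1

namespace Matrix.IsHermitianWrt

variable {F : Type*} [Field F] {σ : F →+* F}

theorem map_div_apply_self {n : Type*} {M M' : Matrix n n F} (hM : M.IsHermitianWrt σ)
    (hM' : M'.IsHermitianWrt σ) (i : n) : σ (M' i i / M i i) = M' i i / M i i := by
  rw [map_div₀, hM.map_apply_self, hM'.map_apply_self]

variable {M M' : Matrix (Fin 2) (Fin 2) F}

theorem apply_zero_one_eq_zero (hM : M.IsHermitianWrt σ) (hMdet : M.det = 0)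
    (h00 : M 0 0 = 0) : M 0 1 = 0 := by
  rw [hM.det_fin_two, h00, zero_mul, zero_sub, neg_eq_zero] at hMdet
  exact σ.eq_zero_of_mul_map_self_eq_zero hMdet

theorem apply_zero_zero_ne_zero_or_apply_one_one_ne_zero (hM : M.IsHermitianWrt σ)
    (hMdet : M.det = 0) (hM0 : M ≠ 0) : M 0 0 ≠ 0 ∨ M 1 1 ≠ 0 := by
  by_contra! h
  obtain ⟨h00, h11⟩ := h
  have h01 : M 0 1 = 0 := hM.apply_zero_one_eq_zero hMdet h00
  apply hM0
  ext i j
  fin_cases i <;> fin_cases j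
  · exact h00
  · exact h01
  · simp [hM 0 1, h01]
  · exact h11

theorem eq_smul_of_det_sub_eq_zero (hM : M.IsHermitianWrt σ) (hM' : M'.IsHermitianWrt σ)
    (hMdet : M.det = 0) (hM'det : M'.det = 0) (h00 : M 0 0 ≠ 0) (h : (M - M').det = 0) :
    M' = (M' 0 0 / M 0 0) • M := by
  rw [hM.det_fin_two] at hMdet
  rw [hM'.det_fin_two] at hM'det
  rw [(hM.sub hM').det_fin_two] at h
  simp only [sub_apply, map_sub] at h
  set a := M 0 0
  set b := M 0 1
  set d := M 1 1
  set a' := M' 0 0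
  set b' := M' 0 1
  set d' := M' 1 1
  set α := a' / a with hα
  have hσa : σ a = a := hM.map_apply_self 0
  have hσa' : σ a' = a' := hM'.map_apply_self 0
  have hσα : σ α = α := hM.map_div_apply_self hM' 0
  have ha' : a' = α * a := (div_mul_cancel₀ a' h00).symm
  have hb' : b' = α * b := by
    have hx : (a * b' - a' * b) * σ (a * b' - a' * b) = 0 := by
      rw [map_sub, map_mul, map_mul, hσa, hσa']
      linear_combination -a * a' * h + a' * (a - a') * hMdet - a * (a - a') * hM'det
    rw [hα, div_mul_eq_mul_div, eq_div_iff h00]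
    linear_combination σ.eq_zero_of_mul_map_self_eq_zero hx
  have hd' : d' = α * d := by
    rw [ha', hb', map_mul, hσα] at h hM'det
    have had : a * (α * d - d') = 0 := by
      linear_combination h - hM'det - (1 - 2 * α) * hMdet
    exact (sub_eq_zero.1 ((mul_eq_zero.1 had).resolve_left h00)).symm
  ext i j
  fin_cases i <;> fin_cases j
  · exact ha'
  · exact hb'
  · show M' 1 0 = α * M 1 0
    rw [hM 0 1, hM' 0 1, ← hσα, ← map_mul, ← hb']
  · exact hd'

theorem det_sub_eq_zero_iff (hM : M.IsHermitianWrt σ) (hM' : M'.IsHermitianWrt σ)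
    (hMdet : M.det = 0) (hM'det : M'.det = 0) (hM0 : M ≠ 0) :
    (M - M').det = 0 ↔ ∃ α, σ α = α ∧ M' = α • M := by
  refine ⟨fun h => ?_, fun ⟨α, _, hα⟩ => hα ▸ det_sub_smul_self_eq_zero hMdet α⟩
  rcases hM.apply_zero_zero_ne_zero_or_apply_one_one_ne_zero hMdet hM0 with h00 | h11
  · exact ⟨_, hM.map_div_apply_self hM' 0, hM.eq_smul_of_det_sub_eq_zero hM' hMdet hM'det h00 h⟩
  · let e := Equiv.swap (0 : Fin 2) 1
    have hswap := (hM.submatrix e).eq_smul_of_det_sub_eq_zero (hM'.submatrix e)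
      (by rwa [det_submatrix_equiv_self]) (by rwa [det_submatrix_equiv_self]) h11
      ((det_submatrix_equiv_self e (M - M')).trans h)
    refine ⟨_, hM.map_div_apply_self hM' 1, ?_⟩
    ext i j
    simpa [e] using congrFun₂ hswap (e i) (e j)

end Matrix.IsHermitianWrt

theorem singular_hermitian_adj_iff_smul_general (p m : ℕ) (hp : p.Prime)
    (q : ℕ) (hq : q = p ^ m)
    (F : Type*) [Field F] (hchar : CharP F p)
    (M M' : Matrix (Fin 2) (Fin 2) F)
    (hM : ∀ i j, M j i = (M i j) ^ q) (hM0 : M ≠ 0) (hMdet : M.det = 0)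
    (hM' : ∀ i j, M' j i = (M' i j) ^ q) (hM'det : M'.det = 0) :
    (M - M').det = 0 ↔ ∃ α : F, α ^ q = α ∧ M' = α • M := by
  subst hq
  have : ExpChar F p := ExpChar.prime hp
  have hFrob {N : Matrix (Fin 2) (Fin 2) F} (hN : ∀ i j, N j i = N i j ^ p ^ m) :
      N.IsHermitianWrt (iterateFrobenius F p m) := hN
  simpa only [iterateFrobenius_def] using
    (hFrob hM).det_sub_eq_zero_iff (hFrob hM') hMdet hM'det hM0

/-- Over a finite field `F` with `q²` elements (`q = p^m`, `p = char F` prime), if `M` and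
`M'` are distinct nonzero singular `2 × 2` Hermitian matrices (`M_{ji} = (M_{ij})^q`), then
`det(M − M') = 0` iff `M' = α • M` for some `α ∈ F` with `α^q = α`. -/
theorem singular_hermitian_adj_iff_smul (p m : ℕ) (hp : p.Prime) (hm : 1 ≤ m)
    (q : ℕ) (hq : q = p ^ m)
    (F : Type*) [Field F] [Fintype F] (hchar : CharP F p)
    (hcard : Fintype.card F = q ^ 2)
    (M M' : Matrix (Fin 2) (Fin 2) F)
    (hM : ∀ i j, M j i = (M i j) ^ q) (hM0 : M ≠ 0) (hMdet : M.det = 0)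
    (hM' : ∀ i j, M' j i = (M' i j) ^ q) (hM'0 : M' ≠ 0) (hM'det : M'.det = 0)
    (hne : M ≠ M') :
    (M - M').det = 0 ↔ ∃ α : F, α ^ q = α ∧ M' = α • M :=
  singular_hermitian_adj_iff_smul_general p m hp q hq F hchar M M' hM hM0 hMdet hM' hM'det
end
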